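/- arXiv:2511.03443 — 7 statements merged into one kernel-verified Lean document; each statement's English description precedes it below -/
import Mathlib

section
/- Let f : ℝ^{n×p} → ℝ be differentiable with ∇f L-Lipschitz continuous (with respect to the Frobenius norm) for some L ≥ 0, and let η > L. If Z, X ∈ O^{n,p}_+ satisfy f̄_Z(X) ≤ f̄_Z(Z), then f(Z) − f(X) ≥ ((η − L)/2)·‖X − Z‖_F². -/
open Matrix

attribute [local instance] Matrix.frobeniusNormedAddCommGroup Matrix.frobeniusNormedSpace

/-- Frobenius norm of a real matrix. -/
noncomputable def fnorm {n p : ℕ} (A : Matrix (Fin n) (Fin p) ℝ) : ℝ :=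
  Real.sqrt (∑ i, ∑ j, (A i j) ^ 2)

/-- Frobenius inner product of real matrices. -/
noncomputable def finner {n p : ℕ} (A B : Matrix (Fin n) (Fin p) ℝ) : ℝ :=
  ∑ i, ∑ j, A i j * B i j

/-- `g` is the (Euclidean) gradient of the differentiable function `f`. -/
def IsGradient {n p : ℕ} (f : Matrix (Fin n) (Fin p) ℝ → ℝ)
    (g : Matrix (Fin n) (Fin p) ℝ → Matrix (Fin n) (Fin p) ℝ) : Prop :=
  Differentiable ℝ f ∧ ∀ Z H, fderiv ℝ f Z H = finner (g Z) H

/-- The proximal linearization `f̄_Z(X) = f(Z) + ⟨∇f(Z), X − Z⟩ + (η/2)‖X − Z‖_F²`. -/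
noncomputable def fbar {n p : ℕ} (f : Matrix (Fin n) (Fin p) ℝ → ℝ)
    (g : Matrix (Fin n) (Fin p) ℝ → Matrix (Fin n) (Fin p) ℝ)
    (η : ℝ) (Z X : Matrix (Fin n) (Fin p) ℝ) : ℝ :=
  f Z + finner (g Z) (X - Z) + η / 2 * fnorm (X - Z) ^ 2

/-! The gradient of `f` along the segment `t ↦ Z + t • (X - Z)` drifts from `∇f(Z)` by at most
`L t ‖X - Z‖_F`, so comparing with a quadratic gives the descent lemma `f(X) ≤ f̄_Z(X)` with `η` replaced by `L`.
Combined with `f̄_Z(X) ≤ f̄_Z(Z) = f(Z)`, the gap `(η - L)/2 ‖X - Z‖_F²` between the two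
linearizations is the claimed decrease. -/

open Set

theorem le_add_deriv_add_half_of_deriv_sub_le_mul {φ φ' : ℝ → ℝ} {K : ℝ}
    (hφ : ∀ t ∈ Icc (0 : ℝ) 1, HasDerivAt φ (φ' t) t)
    (hφ' : ∀ t ∈ Icc (0 : ℝ) 1, φ' t - φ' 0 ≤ K * t) :
    φ 1 ≤ φ 0 + φ' 0 + K / 2 := by
  have hB : ∀ t, HasDerivAt (fun t => φ 0 + φ' 0 * t + K / 2 * t ^ 2) (φ' 0 + K * t) t := by
    intro t
    have h := (((hasDerivAt_id t).const_mul (φ' 0)).const_add (φ 0)).add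
      ((hasDerivAt_pow 2 t).const_mul (K / 2))
    exact h.congr_deriv (by norm_num; ring)
  have key := image_le_of_deriv_right_le_deriv_boundary (a := 0) (b := 1)
    (fun t ht => (hφ t ht).continuousAt.continuousWithinAt)
    (fun t ht => (hφ t (Ico_subset_Icc_self ht)).hasDerivWithinAt) (le_of_eq (by simp))
    (fun t _ => (hB t).continuousAt.continuousWithinAt) (fun t _ => (hB t).hasDerivWithinAt)
    (fun t ht => by linarith [hφ' t (Ico_subset_Icc_self ht)]) (right_mem_Icc.2 zero_le_one)
  simpa using key

section Frobenius

variable {n p : ℕ}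

lemma fnorm_nonneg (A : Matrix (Fin n) (Fin p) ℝ) : 0 ≤ fnorm A :=
  Real.sqrt_nonneg _

lemma fnorm_smul (c : ℝ) (A : Matrix (Fin n) (Fin p) ℝ) : fnorm (c • A) = |c| * fnorm A := by
  rw [fnorm, fnorm, ← Real.sqrt_sq_eq_abs, ← Real.sqrt_mul (sq_nonneg c)]
  simp only [Matrix.smul_apply, smul_eq_mul, mul_pow, Finset.mul_sum]

lemma finner_sub_left (A B C : Matrix (Fin n) (Fin p) ℝ) :
    finner (A - B) C = finner A C - finner B C := by
  simp only [finner, Matrix.sub_apply, sub_mul, Finset.sum_sub_distrib]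

lemma finner_le_fnorm_mul_fnorm (A B : Matrix (Fin n) (Fin p) ℝ) :
    finner A B ≤ fnorm A * fnorm B := by
  simp only [finner, fnorm, ← Fintype.sum_prod_type']
  exact Real.sum_mul_le_sqrt_mul_sqrt _ _ _

end Frobenius

section ProximalLinearization

variable {n p : ℕ} {f : Matrix (Fin n) (Fin p) ℝ → ℝ}
  {g : Matrix (Fin n) (Fin p) ℝ → Matrix (Fin n) (Fin p) ℝ}

lemma IsGradient.hasDerivAt_comp_line (hgrad : IsGradient f g)
    (Z D : Matrix (Fin n) (Fin p) ℝ) (t : ℝ) :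
    HasDerivAt (fun s : ℝ => f (Z + s • D)) (finner (g (Z + t • D)) D) t := by
  have hline : HasDerivAt (fun s : ℝ => Z + s • D) D t :=
    (((hasDerivAt_id t).smul_const D).const_add Z).congr_deriv (one_smul ℝ D)
  rw [← hgrad.2]
  exact (hgrad.1 _).hasFDerivAt.comp_hasDerivAt t hline

lemma fbar_self (η : ℝ) (Z : Matrix (Fin n) (Fin p) ℝ) : fbar f g η Z Z = f Z := by
  simp [fbar, finner, fnorm]

lemma fbar_sub_fbar (η L : ℝ) (Z X : Matrix (Fin n) (Fin p) ℝ) :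
    fbar f g η Z X - fbar f g L Z X = (η - L) / 2 * fnorm (X - Z) ^ 2 := by
  simp only [fbar]; ring

theorem le_fbar_of_lipschitz_gradient {L : ℝ} (hgrad : IsGradient f g)
    (hLip : ∀ A B, fnorm (g A - g B) ≤ L * fnorm (A - B)) (Z X : Matrix (Fin n) (Fin p) ℝ) :
    f X ≤ fbar f g L Z X := by
  set D := X - Z
  have hdrift : ∀ t ∈ Icc (0 : ℝ) 1,
      finner (g (Z + t • D)) D - finner (g (Z + (0 : ℝ) • D)) D ≤ L * fnorm D ^ 2 * t := by
    rintro t ⟨ht, -⟩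
    rw [zero_smul, add_zero, ← finner_sub_left]
    calc finner (g (Z + t • D) - g Z) D ≤ fnorm (g (Z + t • D) - g Z) * fnorm D :=
          finner_le_fnorm_mul_fnorm _ _
      _ ≤ L * fnorm (t • D) * fnorm D := by
          gcongr
          · exact fnorm_nonneg D
          · simpa using hLip (Z + t • D) Z
      _ = L * fnorm D ^ 2 * t := by rw [fnorm_smul, abs_of_nonneg ht]; ring
  have h := le_add_deriv_add_half_of_deriv_sub_le_mul
    (fun t _ => hgrad.hasDerivAt_comp_line Z D t) hdrift
  rw [one_smul, zero_smul, add_zero, add_sub_cancel] at h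
  simpa only [fbar, div_mul_eq_mul_div] using h

end ProximalLinearization

theorem sufficient_decrease_of_proximal_linearization_general
    {n p : ℕ} (f : Matrix (Fin n) (Fin p) ℝ → ℝ)
    (g : Matrix (Fin n) (Fin p) ℝ → Matrix (Fin n) (Fin p) ℝ)
    (L η : ℝ)
    (hgrad : IsGradient f g)
    (hLip : ∀ A B : Matrix (Fin n) (Fin p) ℝ, fnorm (g A - g B) ≤ L * fnorm (A - B))
    (Z X : Matrix (Fin n) (Fin p) ℝ)
    (hdec : fbar f g η Z X ≤ fbar f g η Z Z) :
    (η - L) / 2 * fnorm (X - Z) ^ 2 ≤ f Z - f X := by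
  have hdescent := le_fbar_of_lipschitz_gradient hgrad hLip Z X
  rw [fbar_self] at hdec
  linarith [fbar_sub_fbar (f := f) (g := g) η L Z X]

/-- Lemma `le:lip-f`: if `∇f` is `L`-Lipschitz, `η > L`, and
`Z, X ∈ O^{n,p}_+` satisfy `f̄_Z(X) ≤ f̄_Z(Z)`, then
`f(Z) − f(X) ≥ ((η − L)/2)‖X − Z‖_F²`. -/
theorem sufficient_decrease_of_proximal_linearization
    {n p : ℕ} (f : Matrix (Fin n) (Fin p) ℝ → ℝ)
    (g : Matrix (Fin n) (Fin p) ℝ → Matrix (Fin n) (Fin p) ℝ)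
    (L η : ℝ) (hL : 0 ≤ L) (hη : L < η)
    (hgrad : IsGradient f g)
    (hLip : ∀ A B : Matrix (Fin n) (Fin p) ℝ, fnorm (g A - g B) ≤ L * fnorm (A - B))
    (Z X : Matrix (Fin n) (Fin p) ℝ)
    (hZ : Zᵀ * Z = 1 ∧ ∀ i j, 0 ≤ Z i j)
    (hX : Xᵀ * X = 1 ∧ ∀ i j, 0 ≤ X i j)
    (hdec : fbar f g η Z X ≤ fbar f g η Z Z) :
    (η - L) / 2 * fnorm (X - Z) ^ 2 ≤ f Z - f X :=
  sufficient_decrease_of_proximal_linearization_general f g L η hgrad hLip Z X hdec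
end

section
/- Let c ∈ ℝⁿ, let s ∈ {0,1}ⁿ with supp(s) ≠ ∅, and set b := max(0, −c ⊙ s) ∈ ℝⁿ (entrywise maximum, ⊙ the entrywise product). Suppose b ≠ 0. Then for every x ∈ ℝⁿ with x ≥ 0, ‖x‖₂ = 1 and supp(x) ⊆ supp(s), one has ⟨x, c⟩ ≥ −‖b‖₂; moreover the vector x = b/‖b‖₂ satisfies all these constraints and attains ⟨x, c⟩ = −‖b‖₂. -/
/-!
On the coordinates allowed by `s` we have `-c ≤ b` with `b ≥ 0`, so for feasible `x`,
`⟨x, c⟩ ≥ -⟨x, b⟩ ≥ -‖x‖₂ ‖b‖₂ = -‖b‖₂` by Cauchy–Schwarz. Conversely `b ⊙ c = -b ⊙ b`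
coordinatewise, so `⟨b / ‖b‖₂, c⟩ = -‖b‖₂² / ‖b‖₂ = -‖b‖₂`.
-/

open Finset

section SumOfSquares

variable {ι : Type*} [Fintype ι]

theorem neg_sqrt_mul_sqrt_le_sum_mul {x b c : ι → ℝ} (h : ∀ i, -(x i * b i) ≤ x i * c i) :
    -(√(∑ i, x i ^ 2) * √(∑ i, b i ^ 2)) ≤ ∑ i, x i * c i :=
  calc -(√(∑ i, x i ^ 2) * √(∑ i, b i ^ 2))
      ≤ -∑ i, x i * b i := neg_le_neg (Real.sum_mul_le_sqrt_mul_sqrt _ x b)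
    _ = ∑ i, -(x i * b i) := (sum_neg_distrib _).symm
    _ ≤ ∑ i, x i * c i := sum_le_sum fun i _ => h i

theorem sum_sq_pos_of_ne_zero {b : ι → ℝ} (hb : b ≠ 0) : 0 < ∑ i, b i ^ 2 := by
  obtain ⟨i, hi⟩ := Function.ne_iff.mp hb
  exact sum_pos' (fun j _ => sq_nonneg (b j)) ⟨i, mem_univ i, sq_pos_of_ne_zero hi⟩

theorem sqrt_sum_sq_div_sqrt_sum_sq_eq_one {b : ι → ℝ} (hb : b ≠ 0) :
    √(∑ i, (b i / √(∑ i', b i' ^ 2)) ^ 2) = 1 := by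
  have hpos := sum_sq_pos_of_ne_zero hb
  simp_rw [div_pow, ← sum_div, Real.sq_sqrt hpos.le, div_self hpos.ne', Real.sqrt_one]

theorem sum_div_sqrt_sum_sq_mul_eq {b c : ι → ℝ} (h : ∀ i, b i * c i = -b i ^ 2) :
    ∑ i, b i / √(∑ i', b i' ^ 2) * c i = -√(∑ i, b i ^ 2) := by
  simp_rw [div_mul_eq_mul_div, ← sum_div, h, sum_neg_distrib, neg_div, Real.div_sqrt]

end SumOfSquares

section NegativePart

variable {c s : ℝ}

theorem max_zero_neg_mul_mul_self (hs : s = 0 ∨ s = 1) :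
    max 0 (-(c * s)) * c = -max 0 (-(c * s)) ^ 2 := by
  rcases hs with rfl | rfl
  · simp
  · rcases le_total 0 c with hc | hc
    · rw [max_eq_left (by linarith)]; ring
    · rw [max_eq_right (by linarith)]; ring

theorem neg_mul_max_zero_neg_mul_le {x : ℝ} (hx : 0 ≤ x) (hs : s = 0 ∨ s = 1)
    (hxs : x ≠ 0 → s ≠ 0) : -(x * max 0 (-(c * s))) ≤ x * c := by
  rcases eq_or_ne x 0 with rfl | hx0
  · simp
  · have hneg : -c ≤ max 0 (-(c * s)) := by
      rw [hs.resolve_left (hxs hx0), mul_one]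
      exact le_max_right _ _
    nlinarith

end NegativePart

theorem column_subproblem_nonzero_case_general
    {n : ℕ} (c s : Fin n → ℝ)
    (hs : ∀ i, s i = 0 ∨ s i = 1)
    (b : Fin n → ℝ) (hb : b = fun i => max 0 (-(c i * s i))) (hbne : b ≠ 0) :
    (∀ x : Fin n → ℝ, (∀ i, 0 ≤ x i) → Real.sqrt (∑ i, x i ^ 2) = 1 →
        (∀ i, x i ≠ 0 → s i ≠ 0) →
        -Real.sqrt (∑ i, b i ^ 2) ≤ ∑ i, x i * c i) ∧
    (∀ i, 0 ≤ b i / Real.sqrt (∑ i', b i' ^ 2)) ∧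
    Real.sqrt (∑ i, (b i / Real.sqrt (∑ i', b i' ^ 2)) ^ 2) = 1 ∧
    (∀ i, b i / Real.sqrt (∑ i', b i' ^ 2) ≠ 0 → s i ≠ 0) ∧
    (∑ i, (b i / Real.sqrt (∑ i', b i' ^ 2)) * c i) = -Real.sqrt (∑ i, b i ^ 2) := by
  have hbi (i : Fin n) : b i = max 0 (-(c i * s i)) := congrFun hb i
  refine ⟨fun x hx hxnorm hxs => ?_, fun i => ?_, sqrt_sum_sq_div_sqrt_sum_sq_eq_one hbne,
    fun i hi hsi => ?_, sum_div_sqrt_sum_sq_mul_eq fun i => ?_⟩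
  · have key := neg_sqrt_mul_sqrt_le_sum_mul (b := b) (c := c) fun i => by
      rw [hbi]; exact neg_mul_max_zero_neg_mul_le (hx i) (hs i) (hxs i)
    rwa [hxnorm, one_mul] at key
  · rw [hbi]; exact div_nonneg (le_max_left _ _) (Real.sqrt_nonneg _)
  · simp [hbi, hsi] at hi
  · rw [hbi]; exact max_zero_neg_mul_mul_self (hs i)

/-- For `c ∈ ℝⁿ`, `s ∈ {0,1}ⁿ` with nonempty support, and
`b := max(0, −c ⊙ s) ≠ 0`, every `x ≥ 0` with `‖x‖₂ = 1` and `supp(x) ⊆ supp(s)`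
satisfies `⟨x, c⟩ ≥ −‖b‖₂`, and `x = b/‖b‖₂` is feasible and attains the bound. -/
theorem column_subproblem_nonzero_case
    {n : ℕ} (c s : Fin n → ℝ)
    (hs : ∀ i, s i = 0 ∨ s i = 1) (hsupp : ∃ i, s i ≠ 0)
    (b : Fin n → ℝ) (hb : b = fun i => max 0 (-(c i * s i))) (hbne : b ≠ 0) :
    (∀ x : Fin n → ℝ, (∀ i, 0 ≤ x i) → Real.sqrt (∑ i, x i ^ 2) = 1 →
        (∀ i, x i ≠ 0 → s i ≠ 0) →
        -Real.sqrt (∑ i, b i ^ 2) ≤ ∑ i, x i * c i) ∧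
    (∀ i, 0 ≤ b i / Real.sqrt (∑ i', b i' ^ 2)) ∧
    Real.sqrt (∑ i, (b i / Real.sqrt (∑ i', b i' ^ 2)) ^ 2) = 1 ∧
    (∀ i, b i / Real.sqrt (∑ i', b i' ^ 2) ≠ 0 → s i ≠ 0) ∧
    (∑ i, (b i / Real.sqrt (∑ i', b i' ^ 2)) * c i) = -Real.sqrt (∑ i, b i ^ 2) :=
  column_subproblem_nonzero_case_general c s hs b hb hbne
end

section
/- Let 1 ≤ p ≤ n, let f : ℝ^{n×p} → ℝ be differentiable, η > 0, Z ∈ O^{n,p}_+, and let S be a sign pattern. Set W := max(0, (ηZ − ∇f(Z)) ⊙ S) ∈ ℝ^{n×p} (entrywise), and for each column j define α_j := −‖W_{:,j}‖₂ if W_{:,j} ≠ 0, and α_j := min{[∇f(Z) − ηZ]_{i,j} : S_{i,j} = 1} otherwise. Define X̄ ∈ ℝ^{n×p} columnwise by X̄_{:,j} := W_{:,j}/‖W_{:,j}‖₂ if W_{:,j} ≠ 0, and X̄_{:,j} := e_{ī(j)} otherwise, where ī(j) ∈ {i : S_{i,j} = 1} attains the minimum defining α_j. Then X̄ ∈ O^{n,p}_+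 with supp(X̄) ⊆ supp(S), and for every X ∈ O^{n,p}_+ with supp(X) ⊆ supp(S) one has f̄_Z(X) ≥ f̄_Z(X̄) = f(Z) − ⟨∇f(Z), Z⟩ + ηp + Σ_{j=1}^{p} α_j. -/
open Matrix

attribute [local instance] Matrix.frobeniusNormedAddCommGroup Matrix.frobeniusNormedSpace

/-!
Since `XᵀX = ZᵀZ = I_p`, the quadratic term `(η/2)‖X − Z‖_F² = ηp − η⟨Z, X⟩` is affine in `X`,
so on the feasible set `f̄_Z(X)` is a constant plus `⟨∇f(Z) − ηZ, X⟩`. Because each row of `S`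
has at most one nonzero entry, columns supported in `S` have disjoint supports, so this linear
function is minimized column by column: the `j`-th column minimizes `⟨c, x⟩`, with `c` the
`j`-th column of `∇f(Z) − ηZ`, over unit vectors `x ≥ 0` supported in the `j`-th column of `S`.
If `w = max(0, −c)` restricted to that support is nonzero, Cauchy–Schwarz gives
`⟨c, x⟩ ≥ −⟨w, x⟩ ≥ −‖w‖`, attained at `w/‖w‖`; otherwise `c ≥ 0` on the support and
`⟨c, x⟩ ≥ (min c) · Σ xᵢ ≥ min c`, since `Σ xᵢ ≥ Σ xᵢ² = 1`, attained at a basis vector.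
-/

section Column

variable {ι : Type*} [Fintype ι]

theorem one_le_sum_of_sum_sq_eq_one {x : ι → ℝ} (hx : ∀ i, 0 ≤ x i) (h : ∑ i, x i ^ 2 = 1) :
    1 ≤ ∑ i, x i := by
  rw [← h]
  refine Finset.sum_le_sum fun i _ => ?_
  have hle : x i ^ 2 ≤ 1 :=
    h ▸ Finset.single_le_sum (fun j _ => sq_nonneg (x j)) (Finset.mem_univ i)
  nlinarith [hx i]

theorem sum_mul_le_sum_mul_of_le_on_support {c d x : ι → ℝ} (hcd : ∀ i, x i ≠ 0 → c i ≤ d i)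
    (hx : ∀ i, 0 ≤ x i) : ∑ i, c i * x i ≤ ∑ i, d i * x i := by
  refine Finset.sum_le_sum fun i _ => ?_
  rcases eq_or_ne (x i) 0 with h0 | h0
  · simp [h0]
  · exact mul_le_mul_of_nonneg_right (hcd i h0) (hx i)

theorem le_sum_mul_of_sum_sq_eq_one {c x : ι → ℝ} {a : ℝ} (ha : 0 ≤ a)
    (hac : ∀ i, x i ≠ 0 → a ≤ c i) (hx : ∀ i, 0 ≤ x i) (h : ∑ i, x i ^ 2 = 1) :
    a ≤ ∑ i, c i * x i :=
  calc a ≤ a * ∑ i, x i := le_mul_of_one_le_right ha (one_le_sum_of_sum_sq_eq_one hx h)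
    _ = ∑ i, a * x i := Finset.mul_sum ..
    _ ≤ ∑ i, c i * x i := sum_mul_le_sum_mul_of_le_on_support hac hx

theorem neg_sqrt_sum_sq_le_sum_mul {c w x : ι → ℝ} (hcw : ∀ i, x i ≠ 0 → -w i ≤ c i)
    (hx : ∀ i, 0 ≤ x i) (h : ∑ i, x i ^ 2 = 1) :
    -√(∑ i, w i ^ 2) ≤ ∑ i, c i * x i := by
  have hcs := Real.sum_mul_le_sqrt_mul_sqrt Finset.univ w x
  rw [h, Real.sqrt_one, mul_one] at hcs
  calc -√(∑ i, w i ^ 2) ≤ ∑ i, -w i * x i := by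
        simpa only [neg_mul, Finset.sum_neg_distrib, neg_le_neg_iff] using hcs
    _ ≤ ∑ i, c i * x i := sum_mul_le_sum_mul_of_le_on_support hcw hx

theorem sum_mul_div_sqrt_sum_sq {c w : ι → ℝ} (hcw : ∀ i, w i ≠ 0 → c i = -w i) :
    ∑ i, c i * (w i / √(∑ i, w i ^ 2)) = -√(∑ i, w i ^ 2) := by
  have hcw' : ∀ i, c i * w i = -(w i ^ 2) := fun i => by
    rcases eq_or_ne (w i) 0 with h0 | h0
    · simp [h0]
    · rw [hcw i h0]; ring
  simp_rw [← mul_div_assoc, hcw', ← Finset.sum_div, Finset.sum_neg_distrib, neg_div,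
    Real.div_sqrt]

theorem sum_div_sqrt_sum_sq_sq {w : ι → ℝ} (hw : ∃ i, w i ≠ 0) :
    ∑ i, (w i / √(∑ i, w i ^ 2)) ^ 2 = 1 := by
  obtain ⟨i, hi⟩ := hw
  have hpos : 0 < ∑ i, w i ^ 2 :=
    Finset.sum_pos' (fun i _ => sq_nonneg _) ⟨i, Finset.mem_univ _, by positivity⟩
  simp_rw [div_pow, Real.sq_sqrt hpos.le, ← Finset.sum_div, div_self hpos.ne']

theorem linear_min_on_nonneg_unit_supported [DecidableEq ι] {c s w xb : ι → ℝ} {i₀ : ι} {a : ℝ}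
    (hs : ∀ i, s i = 0 ∨ s i = 1) (hw : ∀ i, w i = max 0 (-c i * s i))
    (hi₀ : (∀ i, w i = 0) → s i₀ = 1 ∧ ∀ i, s i = 1 → c i₀ ≤ c i)
    (ha₁ : ¬ (∀ i, w i = 0) → a = -√(∑ i, w i ^ 2)) (ha₀ : (∀ i, w i = 0) → a = c i₀)
    (hxb₁ : ¬ (∀ i, w i = 0) → ∀ i, xb i = w i / √(∑ i', w i' ^ 2))
    (hxb₀ : (∀ i, w i = 0) → ∀ i, xb i = if i = i₀ then 1 else 0) :
    ((∀ i, 0 ≤ xb i) ∧ ∑ i, xb i ^ 2 = 1 ∧ ∀ i, xb i ≠ 0 → s i ≠ 0) ∧ ∑ i, c i * xb i = a ∧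
      ∀ x : ι → ℝ, (∀ i, 0 ≤ x i) → ∑ i, x i ^ 2 = 1 → (∀ i, x i ≠ 0 → s i ≠ 0) →
        a ≤ ∑ i, c i * x i := by
  have hc_ge : ∀ i, s i ≠ 0 → -w i ≤ c i := fun i hi => by
    rw [hw, (hs i).resolve_left hi, mul_one]
    linarith [le_max_right 0 (-c i)]
  have hc_eq : ∀ i, w i ≠ 0 → s i ≠ 0 ∧ c i = -w i := fun i hi => by
    rcases hs i with h0 | h1
    · simp [hw, h0] at hi
    · rw [hw, h1, mul_one] at hi ⊢
      rcases max_choice 0 (-c i) with h | h <;> rw [h] at hi ⊢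
      · exact (hi rfl).elim
      · simp
  by_cases hw0 : ∀ i, w i = 0
  · obtain ⟨hsi₀, hmin⟩ := hi₀ hw0
    have hc₀ : 0 ≤ c i₀ := by simpa [hw0] using hc_ge i₀ (by simp [hsi₀])
    rw [ha₀ hw0, funext (hxb₀ hw0)]
    refine ⟨⟨fun i => by dsimp only; split_ifs <;> norm_num, by simp [ite_pow], fun i hi => ?_⟩,
      by simp, fun x hx h1 hxs => le_sum_mul_of_sum_sq_eq_one hc₀
        (fun i hi => hmin i ((hs i).resolve_left (hxs i hi))) hx h1⟩
    obtain rfl : i = i₀ := by simpa using hi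
    simp [hsi₀]
  · rw [ha₁ hw0, funext (hxb₁ hw0)]
    refine ⟨⟨fun i => div_nonneg (hw i ▸ le_max_left _ _) (Real.sqrt_nonneg _),
      sum_div_sqrt_sum_sq_sq (not_forall.mp hw0),
      fun i hi => (hc_eq i (left_ne_zero_of_mul hi)).1⟩,
      sum_mul_div_sqrt_sum_sq fun i hi => (hc_eq i hi).2,
      fun x hx h1 hxs => neg_sqrt_sum_sq_le_sum_mul (fun i hi => hc_ge i (hxs i hi)) hx h1⟩

end Column

namespace Matrix

variable {m n R : Type*} [Fintype m] [Semiring R]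

theorem sum_col_sq_eq_one [DecidableEq n] {X : Matrix m n R} (h : Xᵀ * X = 1) (j : n) :
    ∑ i, X i j ^ 2 = 1 := by
  simpa [mul_apply, sq] using congrFun (congrFun h j) j

theorem sum_sq_eq_card [Fintype n] [DecidableEq n] {X : Matrix m n R} (h : Xᵀ * X = 1) :
    ∑ i, ∑ j, X i j ^ 2 = Fintype.card n := by
  rw [Finset.sum_comm]
  simp [sum_col_sq_eq_one h]

theorem transpose_mul_self_eq_one_of_col [DecidableEq n] {X : Matrix m n R}
    (hcol : ∀ j, ∑ i, X i j ^ 2 = 1) (hdisj : ∀ i j j', X i j ≠ 0 → X i j' ≠ 0 → j = j') :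
    Xᵀ * X = 1 := by
  ext j j'
  rcases eq_or_ne j j' with rfl | hne
  · simpa [mul_apply, sq] using hcol j
  · rw [mul_apply, one_apply_ne hne]
    refine Finset.sum_eq_zero fun i _ => ?_
    by_contra h
    exact hne (hdisj i j j' (left_ne_zero_of_mul h) (right_ne_zero_of_mul h))

end Matrix

theorem fbar_eq_of_transpose_mul_self_eq_one {n p : ℕ} (f : Matrix (Fin n) (Fin p) ℝ → ℝ)
    (g : Matrix (Fin n) (Fin p) ℝ → Matrix (Fin n) (Fin p) ℝ) (η : ℝ)
    {Z X : Matrix (Fin n) (Fin p) ℝ} (hZ : Zᵀ * Z = 1) (hX : Xᵀ * X = 1) :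
    fbar f g η Z X = f Z - finner (g Z) Z + η * p + ∑ j, ∑ i, (g Z i j - η * Z i j) * X i j := by
  calc fbar f g η Z X
      = f Z + ∑ i, ∑ j, ((g Z i j - η * Z i j) * X i j - g Z i j * Z i j
          + η / 2 * (X i j ^ 2 + Z i j ^ 2)) := by
        rw [fbar, fnorm, Real.sq_sqrt (by positivity), finner, Finset.mul_sum, add_assoc,
          ← Finset.sum_add_distrib]
        refine congrArg _ (Finset.sum_congr rfl fun i _ => ?_)
        rw [Finset.mul_sum, ← Finset.sum_add_distrib]
        refine Finset.sum_congr rfl fun j _ => ?_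
        simp only [Matrix.sub_apply]
        ring
    _ = _ := by
        simp only [Finset.sum_add_distrib, Finset.sum_sub_distrib, ← Finset.mul_sum,
          Matrix.sum_sq_eq_card hX, Matrix.sum_sq_eq_card hZ, finner, Fintype.card_fin]
        rw [Finset.sum_comm (f := fun i j => (g Z i j - η * Z i j) * X i j)]
        ring

theorem proximal_linearization_fixed_support_global_min_general
    {n p : ℕ}
    (f : Matrix (Fin n) (Fin p) ℝ → ℝ)
    (g : Matrix (Fin n) (Fin p) ℝ → Matrix (Fin n) (Fin p) ℝ)
    (η : ℝ)
    (Z : Matrix (Fin n) (Fin p) ℝ)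
    (hZ : Zᵀ * Z = 1 ∧ ∀ i j, 0 ≤ Z i j)
    (S : Matrix (Fin n) (Fin p) ℝ)
    (hS01 : ∀ i j, S i j = 0 ∨ S i j = 1)
    (hSrow : ∀ i j j', S i j = 1 → S i j' = 1 → j = j')
    (W : Matrix (Fin n) (Fin p) ℝ)
    (hW : ∀ i j, W i j = max 0 ((η * Z i j - g Z i j) * S i j))
    (ibar : Fin p → Fin n)
    (hibar : ∀ j, (∀ i, W i j = 0) → S (ibar j) j = 1 ∧
        ∀ i, S i j = 1 → g Z (ibar j) j - η * Z (ibar j) j ≤ g Z i j - η * Z i j)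
    (α : Fin p → ℝ)
    (hα1 : ∀ j, ¬ (∀ i, W i j = 0) → α j = -Real.sqrt (∑ i, W i j ^ 2))
    (hα0 : ∀ j, (∀ i, W i j = 0) → α j = g Z (ibar j) j - η * Z (ibar j) j)
    (Xb : Matrix (Fin n) (Fin p) ℝ)
    (hXb1 : ∀ j, ¬ (∀ i, W i j = 0) →
        ∀ i, Xb i j = W i j / Real.sqrt (∑ i', W i' j ^ 2))
    (hXb0 : ∀ j, (∀ i, W i j = 0) → ∀ i, Xb i j = if i = ibar j then 1 else 0) :
    (Xbᵀ * Xb = 1 ∧ (∀ i j, 0 ≤ Xb i j) ∧ (∀ i j, Xb i j ≠ 0 → S i j ≠ 0)) ∧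
    fbar f g η Z Xb = f Z - finner (g Z) Z + η * (p : ℝ) + ∑ j, α j ∧
    (∀ X : Matrix (Fin n) (Fin p) ℝ, Xᵀ * X = 1 → (∀ i j, 0 ≤ X i j) →
        (∀ i j, X i j ≠ 0 → S i j ≠ 0) → fbar f g η Z Xb ≤ fbar f g η Z X) := by
  obtain ⟨hZ, -⟩ := hZ
  have hcol := fun j => linear_min_on_nonneg_unit_supported (c := fun i => g Z i j - η * Z i j)
    (s := fun i => S i j) (w := fun i => W i j) (hS01 · j) (fun i => by rw [hW, neg_sub])
    (hibar j) (hα1 j) (hα0 j) (hXb1 j) (hXb0 j)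
  have hS1 : ∀ {i j}, Xb i j ≠ 0 → S i j = 1 := fun {i j} h =>
    (hS01 i j).resolve_left ((hcol j).1.2.2 i h)
  have hXb : Xbᵀ * Xb = 1 := Matrix.transpose_mul_self_eq_one_of_col (fun j => (hcol j).1.2.1)
    fun i j j' h h' => hSrow i j j' (hS1 h) (hS1 h')
  refine ⟨⟨hXb, fun i j => (hcol j).1.1 i, fun i j => (hcol j).1.2.2 i⟩, ?_, fun X hX hX0 hXS => ?_⟩
  · rw [fbar_eq_of_transpose_mul_self_eq_one f g η hZ hXb,
      Finset.sum_congr rfl fun j _ => (hcol j).2.1]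
  · rw [fbar_eq_of_transpose_mul_self_eq_one f g η hZ hXb,
      fbar_eq_of_transpose_mul_self_eq_one f g η hZ hX]
    refine add_le_add_right (Finset.sum_le_sum fun j _ => ?_) _
    rw [(hcol j).2.1]
    exact (hcol j).2.2 _ (hX0 · j) (Matrix.sum_col_sq_eq_one hX j) (hXS · j)

/-- Proposition `prop:supp`: the global minimizer of the proximal
linearization of `f` at `Z ∈ O^{n,p}_+` over the support set given by a sign
pattern `S` is `X̄` defined columnwise from `W = max(0, (ηZ − ∇f(Z)) ⊙ S)`,
with minimum value `f(Z) − ⟨∇f(Z), Z⟩ + ηp + Σ_j α_j`. -/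
theorem proximal_linearization_fixed_support_global_min
    {n p : ℕ} (hp : 1 ≤ p) (hpn : p ≤ n)
    (f : Matrix (Fin n) (Fin p) ℝ → ℝ)
    (g : Matrix (Fin n) (Fin p) ℝ → Matrix (Fin n) (Fin p) ℝ)
    (hgrad : IsGradient f g)
    (η : ℝ) (hη : 0 < η)
    (Z : Matrix (Fin n) (Fin p) ℝ)
    (hZ : Zᵀ * Z = 1 ∧ ∀ i j, 0 ≤ Z i j)
    (S : Matrix (Fin n) (Fin p) ℝ)
    (hS01 : ∀ i j, S i j = 0 ∨ S i j = 1)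
    (hSrow : ∀ i j j', S i j = 1 → S i j' = 1 → j = j')
    (hScol : ∀ j, ∃ i, S i j = 1)
    (W : Matrix (Fin n) (Fin p) ℝ)
    (hW : ∀ i j, W i j = max 0 ((η * Z i j - g Z i j) * S i j))
    (ibar : Fin p → Fin n)
    (hibar : ∀ j, (∀ i, W i j = 0) → S (ibar j) j = 1 ∧
        ∀ i, S i j = 1 → g Z (ibar j) j - η * Z (ibar j) j ≤ g Z i j - η * Z i j)
    (α : Fin p → ℝ)
    (hα1 : ∀ j, ¬ (∀ i, W i j = 0) → α j = -Real.sqrt (∑ i, W i j ^ 2))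
    (hα0 : ∀ j, (∀ i, W i j = 0) → α j = g Z (ibar j) j - η * Z (ibar j) j)
    (Xb : Matrix (Fin n) (Fin p) ℝ)
    (hXb1 : ∀ j, ¬ (∀ i, W i j = 0) →
        ∀ i, Xb i j = W i j / Real.sqrt (∑ i', W i' j ^ 2))
    (hXb0 : ∀ j, (∀ i, W i j = 0) → ∀ i, Xb i j = if i = ibar j then 1 else 0) :
    (Xbᵀ * Xb = 1 ∧ (∀ i j, 0 ≤ Xb i j) ∧ (∀ i j, Xb i j ≠ 0 → S i j ≠ 0)) ∧
    fbar f g η Z Xb = f Z - finner (g Z) Z + η * (p : ℝ) + ∑ j, α j ∧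
    (∀ X : Matrix (Fin n) (Fin p) ℝ, Xᵀ * X = 1 → (∀ i j, 0 ≤ X i j) →
        (∀ i j, X i j ≠ 0 → S i j ≠ 0) → fbar f g η Z Xb ≤ fbar f g η Z X) :=
  proximal_linearization_fixed_support_global_min_general f g η Z hZ S hS01 hSrow W hW ibar hibar α
    hα1 hα0 Xb hXb1 hXb0
end

section
/- Let 1 ≤ p ≤ n, let f : ℝ^{n×p} → ℝ be differentiable, η > 0, X ∈ O^{n,p}_+, and let S be a sign pattern. Set W := max(0, (ηX − ∇f(X)) ⊙ S) (entrywise) and define Y ∈ ℝ^{n×p} columnwise by Y_{:,j} := W_{:,j}/‖W_{:,j}‖₂ if W_{:,j} ≠ 0, and Y_{:,j} := e_{ī(j)} otherwise, where ī(j) ∈ {i : S_{i,j} = 1} minimizes i ↦ [∇f(X) − ηX]_{i,j} over {i : S_{i,j} = 1}. Then for every (i,j) ∈ supp(Y), [ηX − ∇f(X)]_{i,j} − (⟨Y_{:,j}, [ηX − ∇f(X)]_{:,j}⟩)·Y_{i,j} = 0. -/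
open Matrix

attribute [local instance] Matrix.frobeniusNormedAddCommGroup Matrix.frobeniusNormedSpace

def StationaryOnSupport {ι : Type*} [Fintype ι] (y v : ι → ℝ) : Prop :=
  ∀ i, y i ≠ 0 → v i - (∑ i', y i' * v i') * y i = 0

section StationaryOnSupport

variable {ι : Type*} [Fintype ι]

theorem stationaryOnSupport_of_eq_ite [DecidableEq ι] {y v : ι → ℝ} {k : ι}
    (hy : ∀ i, y i = if i = k then 1 else 0) : StationaryOnSupport y v := by
  intro i hi
  obtain rfl : i = k := by
    by_contra h
    simp [hy i, h] at hi
  have hsum : ∑ i', y i' * v i' = v i := by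
    rw [Finset.sum_eq_single i (fun b _ hb => by simp [hy b, hb]) (by simp)]
    simp [hy i]
  simp [hsum, hy i]

/-- Where `w` is nonzero it agrees with `v`, so `⟪w, v⟫ = ‖w‖²` and `⟪w / ‖w‖, v⟫ = ‖w‖`. -/
theorem stationaryOnSupport_of_eq_div_sqrt {y v w : ι → ℝ}
    (hw : ∀ i, w i ≠ 0 → w i = v i) (hy : ∀ i, y i = w i / √(∑ i', w i' ^ 2)) :
    StationaryOnSupport y v := by
  intro i hi
  have hwv : ∀ i', w i' * v i' = w i' ^ 2 := fun i' => by
    by_cases h : w i' = 0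
    · simp [h]
    · rw [← hw i' h, sq]
  have hsum : ∑ i', y i' * v i' = √(∑ i', w i' ^ 2) := by
    simp_rw [hy, div_mul_eq_mul_div, hwv, ← Finset.sum_div, Real.div_sqrt]
  rw [hy i] at hi ⊢
  obtain ⟨hwi, hr⟩ := div_ne_zero_iff.mp hi
  rw [hsum, mul_div_cancel₀ _ hr, hw i hwi, sub_self]

end StationaryOnSupport

theorem max_zero_mul_eq_self_of_ne_zero {v s : ℝ} (hs : s = 0 ∨ s = 1)
    (h : max 0 (v * s) ≠ 0) : max 0 (v * s) = v := by
  rcases hs with rfl | rfl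
  · simp at h
  · rw [mul_one] at h ⊢
    rcases le_total v 0 with hv | hv
    · exact absurd (max_eq_left hv) h
    · exact max_eq_right hv

theorem stationarity_relation_on_support_general
    {n p : ℕ}
    (g : Matrix (Fin n) (Fin p) ℝ → Matrix (Fin n) (Fin p) ℝ)
    (η : ℝ)
    (X : Matrix (Fin n) (Fin p) ℝ)
    (S : Matrix (Fin n) (Fin p) ℝ)
    (hS01 : ∀ i j, S i j = 0 ∨ S i j = 1)
    (W : Matrix (Fin n) (Fin p) ℝ)
    (hW : ∀ i j, W i j = max 0 ((η * X i j - g X i j) * S i j))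
    (ibar : Fin p → Fin n)
    (Y : Matrix (Fin n) (Fin p) ℝ)
    (hY1 : ∀ j, ¬ (∀ i, W i j = 0) →
        ∀ i, Y i j = W i j / Real.sqrt (∑ i', W i' j ^ 2))
    (hY0 : ∀ j, (∀ i, W i j = 0) → ∀ i, Y i j = if i = ibar j then 1 else 0) :
    ∀ i j, Y i j ≠ 0 →
      (η * X i j - g X i j) - (∑ i', Y i' j * (η * X i' j - g X i' j)) * Y i j = 0 := by
  intro i j hYij
  by_cases hW0 : ∀ i, W i j = 0
  · exact stationaryOnSupport_of_eq_ite (v := fun i => η * X i j - g X i j) (hY0 j hW0) i hYij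
  · have hWv : ∀ i', W i' j ≠ 0 → W i' j = η * X i' j - g X i' j := fun i' hi' => by
      rw [hW] at hi' ⊢
      exact max_zero_mul_eq_self_of_ne_zero (hS01 i' j) hi'
    exact stationaryOnSupport_of_eq_div_sqrt hWv (hY1 j hW0) i hYij

/-- relation `eq:sc-yk`: if `Y` is obtained columnwise from
`W = max(0, (ηX − ∇f(X)) ⊙ S)` (normalized column if nonzero, unit vector at the
minimizing index otherwise), then for every `(i,j) ∈ supp(Y)`,
`[ηX − ∇f(X)]_{i,j} − (⟨Y_{:,j}, [ηX − ∇f(X)]_{:,j}⟩)·Y_{i,j} = 0`. -/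
theorem stationarity_relation_on_support
    {n p : ℕ} (hp : 1 ≤ p) (hpn : p ≤ n)
    (f : Matrix (Fin n) (Fin p) ℝ → ℝ)
    (g : Matrix (Fin n) (Fin p) ℝ → Matrix (Fin n) (Fin p) ℝ)
    (hgrad : IsGradient f g)
    (η : ℝ) (hη : 0 < η)
    (X : Matrix (Fin n) (Fin p) ℝ)
    (hX : Xᵀ * X = 1 ∧ ∀ i j, 0 ≤ X i j)
    (S : Matrix (Fin n) (Fin p) ℝ)
    (hS01 : ∀ i j, S i j = 0 ∨ S i j = 1)
    (hSrow : ∀ i j j', S i j = 1 → S i j' = 1 → j = j')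
    (hScol : ∀ j, ∃ i, S i j = 1)
    (W : Matrix (Fin n) (Fin p) ℝ)
    (hW : ∀ i j, W i j = max 0 ((η * X i j - g X i j) * S i j))
    (ibar : Fin p → Fin n)
    (hibar : ∀ j, (∀ i, W i j = 0) → S (ibar j) j = 1 ∧
        ∀ i, S i j = 1 → g X (ibar j) j - η * X (ibar j) j ≤ g X i j - η * X i j)
    (Y : Matrix (Fin n) (Fin p) ℝ)
    (hY1 : ∀ j, ¬ (∀ i, W i j = 0) →
        ∀ i, Y i j = W i j / Real.sqrt (∑ i', W i' j ^ 2))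
    (hY0 : ∀ j, (∀ i, W i j = 0) → ∀ i, Y i j = if i = ibar j then 1 else 0) :
    ∀ i j, Y i j ≠ 0 →
      (η * X i j - g X i j) - (∑ i', Y i' j * (η * X i' j - g X i' j)) * Y i j = 0 :=
  stationarity_relation_on_support_general g η X S hS01 W hW ibar Y hY1 hY0
end

section
/- Let f : ℝ^{n×p} → ℝ be differentiable, L ≥ 0, η > 0, and let X, Y ∈ O^{n,p}_+ satisfy ‖∇f(Y) − ∇f(X)‖_F ≤ L‖Y − X‖_F. Suppose that at some index pair (i,j) with Y_{i,j} ≠ 0 the condition [ηX − ∇f(X)]_{i,j} − (⟨Y_{:,j}, [ηX − ∇f(X)]_{:,j}⟩)·Y_{i,j} = 0 holds. Then |[grad f(Y)]_{i,j}| ≤ 2(η + L)·‖Y − X‖_F, where [grad f(Y)]_{i,j} = [∇f(Y)]_{i,j} − (⟨Y_{:,j}, [∇f(Y)]_{:,j}⟩)·Y_{i,j}. -/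
/-
Write `P_Y A := A - Y Diag(Yᵀ A)`, so that `grad f(Y) = P_Y(∇f(Y))`. `P_Y` is linear, vanishes
on `Y`, and by hypothesis its `(i,j)` entry vanishes on `ηX - ∇f(X)`; hence at `(i,j)`
`P_Y(∇f(Y)) = P_Y(∇f(Y) - ∇f(X)) - η P_Y(Y - X)`. Since the columns of `Y` are unit vectors,
Cauchy–Schwarz bounds any entry of `P_Y(A)` by `2‖A‖_F`, and the Lipschitz bound finishes.
-/

open Matrix

attribute [local instance] Matrix.frobeniusNormedAddCommGroup Matrix.frobeniusNormedSpace

section TangentProj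

variable {m k R : Type*} [Fintype m] [Fintype k] [DecidableEq k] [CommRing R]

/-- `A ↦ A - Y Diag(Yᵀ A)`, so that `grad f(Y) = tangentProj Y (∇f Y)`. -/
def tangentProj (Y A : Matrix m k R) : Matrix m k R :=
  A - Y * diagonal (Yᵀ * A).diag

theorem tangentProj_apply (Y A : Matrix m k R) (i : m) (j : k) :
    tangentProj Y A i j = A i j - (∑ i', Y i' j * A i' j) * Y i j := by
  rw [tangentProj, Matrix.sub_apply, mul_diagonal, diag_apply, mul_apply, mul_comm (Y i j)]
  simp only [transpose_apply]

theorem tangentProj_sub (Y A B : Matrix m k R) :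
    tangentProj Y (A - B) = tangentProj Y A - tangentProj Y B := by
  ext i j
  simp only [tangentProj_apply, Matrix.sub_apply, mul_sub, Finset.sum_sub_distrib]
  ring

theorem tangentProj_smul (Y A : Matrix m k R) (c : R) :
    tangentProj Y (c • A) = c • tangentProj Y A := by
  ext i j
  simp only [tangentProj_apply, Matrix.smul_apply, smul_eq_mul, mul_left_comm _ c,
    ← Finset.mul_sum]
  ring

theorem tangentProj_self {Y : Matrix m k R} (hY : Yᵀ * Y = 1) : tangentProj Y Y = 0 := by
  simp [tangentProj, hY]

end TangentProj

theorem sum_sq_col_eq_one {m k R : Type*} [Fintype m] [DecidableEq k] [CommRing R]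
    {Y : Matrix m k R} (hY : Yᵀ * Y = 1) (j : k) : ∑ i, Y i j ^ 2 = 1 := by
  simpa [mul_apply, sq] using congrFun (congrFun hY j) j

section Frobenius

variable {n p : ℕ}

theorem sum_sq_col_le_sum_sq (A : Matrix (Fin n) (Fin p) ℝ) (j : Fin p) :
    ∑ i, A i j ^ 2 ≤ ∑ i, ∑ j', A i j' ^ 2 :=
  Finset.sum_le_sum fun i _ =>
    Finset.single_le_sum (f := fun j' => A i j' ^ 2) (fun _ _ => sq_nonneg _) (Finset.mem_univ j)

theorem abs_apply_le_fnorm (A : Matrix (Fin n) (Fin p) ℝ) (i : Fin n) (j : Fin p) :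
    |A i j| ≤ fnorm A := by
  refine Real.abs_le_sqrt (le_trans ?_ (sum_sq_col_le_sum_sq A j))
  exact Finset.single_le_sum (f := fun i' => A i' j ^ 2) (fun _ _ => sq_nonneg _)
    (Finset.mem_univ i)

theorem abs_sum_mul_col_le_fnorm {u : Fin n → ℝ} (hu : ∑ i, u i ^ 2 = 1)
    (A : Matrix (Fin n) (Fin p) ℝ) (j : Fin p) : |∑ i, u i * A i j| ≤ fnorm A := by
  refine Real.abs_le_sqrt (le_trans ?_ (sum_sq_col_le_sum_sq A j))
  simpa [hu] using Finset.sum_mul_sq_le_sq_mul_sq Finset.univ u (fun i => A i j)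

theorem abs_tangentProj_apply_le {Y : Matrix (Fin n) (Fin p) ℝ} {j : Fin p}
    (hY : ∑ i, Y i j ^ 2 = 1) (A : Matrix (Fin n) (Fin p) ℝ) (i : Fin n) :
    |tangentProj Y A i j| ≤ 2 * fnorm A := by
  have hYij : |Y i j| ≤ 1 := by
    rw [← sq_le_one_iff_abs_le_one, ← hY]
    exact Finset.single_le_sum (f := fun i' => Y i' j ^ 2) (fun _ _ => sq_nonneg _)
      (Finset.mem_univ i)
  have hsum := abs_sum_mul_col_le_fnorm hY A j
  calc |tangentProj Y A i j|
      ≤ |A i j| + |∑ i', Y i' j * A i' j| * |Y i j| := by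
        rw [tangentProj_apply, ← abs_mul]
        exact abs_sub _ _
    _ ≤ fnorm A + fnorm A := by
        gcongr
        · exact abs_apply_le_fnorm A i j
        · exact mul_le_of_le_one_right (abs_nonneg _) hYij |>.trans hsum
    _ = 2 * fnorm A := by ring

end Frobenius

theorem riemannian_gradient_entry_bound_general
    {n p : ℕ}
    (g : Matrix (Fin n) (Fin p) ℝ → Matrix (Fin n) (Fin p) ℝ)
    (L η : ℝ) (hη : 0 < η)
    (X Y : Matrix (Fin n) (Fin p) ℝ)
    (hY : Yᵀ * Y = 1 ∧ ∀ i j, 0 ≤ Y i j)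
    (hLip : fnorm (g Y - g X) ≤ L * fnorm (Y - X))
    (i : Fin n) (j : Fin p)
    (hcond : (η * X i j - g X i j) - (∑ i', Y i' j * (η * X i' j - g X i' j)) * Y i j = 0) :
    |g Y i j - (∑ i', Y i' j * g Y i' j) * Y i j| ≤ 2 * (η + L) * fnorm (Y - X) := by
  have hcol := sum_sq_col_eq_one hY.1 j
  have hprojX : tangentProj Y (η • X - g X) i j = 0 := by
    simpa [tangentProj_apply] using hcond
  have key : tangentProj Y (g Y) i j
      = tangentProj Y (g Y - g X) i j - η * tangentProj Y (Y - X) i j := by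
    simp only [tangentProj_sub, tangentProj_smul, tangentProj_self hY.1, Matrix.sub_apply,
      Matrix.smul_apply, smul_eq_mul, Matrix.zero_apply] at hprojX ⊢
    linear_combination -hprojX
  rw [← tangentProj_apply, key]
  calc |tangentProj Y (g Y - g X) i j - η * tangentProj Y (Y - X) i j|
      ≤ |tangentProj Y (g Y - g X) i j| + η * |tangentProj Y (Y - X) i j| := by
        refine (abs_sub _ _).trans_eq ?_
        rw [abs_mul, abs_of_pos hη]
    _ ≤ 2 * fnorm (g Y - g X) + η * (2 * fnorm (Y - X)) := by
        gcongr <;> exact abs_tangentProj_apply_le hcol _ i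
    _ ≤ 2 * (η + L) * fnorm (Y - X) := by linarith

/-- bound `eq:supp-yk`: if `‖∇f(Y) − ∇f(X)‖_F ≤ L‖Y − X‖_F` and at
`(i,j)` with `Y_{i,j} ≠ 0` the relation
`[ηX − ∇f(X)]_{i,j} − ⟨Y_{:,j}, [ηX − ∇f(X)]_{:,j}⟩·Y_{i,j} = 0` holds, then
`|[grad f(Y)]_{i,j}| ≤ 2(η + L)‖Y − X‖_F`. -/
theorem riemannian_gradient_entry_bound
    {n p : ℕ}
    (f : Matrix (Fin n) (Fin p) ℝ → ℝ)
    (g : Matrix (Fin n) (Fin p) ℝ → Matrix (Fin n) (Fin p) ℝ)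
    (hgrad : IsGradient f g)
    (L η : ℝ) (hL : 0 ≤ L) (hη : 0 < η)
    (X Y : Matrix (Fin n) (Fin p) ℝ)
    (hX : Xᵀ * X = 1 ∧ ∀ i j, 0 ≤ X i j)
    (hY : Yᵀ * Y = 1 ∧ ∀ i j, 0 ≤ Y i j)
    (hLip : fnorm (g Y - g X) ≤ L * fnorm (Y - X))
    (i : Fin n) (j : Fin p) (hYij : Y i j ≠ 0)
    (hcond : (η * X i j - g X i j) - (∑ i', Y i' j * (η * X i' j - g X i' j)) * Y i j = 0) :
    |g Y i j - (∑ i', Y i' j * g Y i' j) * Y i j| ≤ 2 * (η + L) * fnorm (Y - X) :=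
  riemannian_gradient_entry_bound_general g L η hη X Y hY hLip i j hcond
end

section
/- Let f : ℝ^{n×p} → ℝ be differentiable with f̲ ≤ f(X) ≤ f̄ for every X ∈ ℝ^{n×p} with XᵀX = I_p. Let L ≥ 0, η > L, θ > 0, C > 0, and let (X_k)_{k≥0}, (Y_k)_{k≥0} be sequences in O^{n,p}_+ satisfying for all k: (a) f(X_k) − f(X_{k+1}) ≥ ((η − L)/2)·(‖Y_k − X_k‖_F² + ‖X_{k+1} − Y_k‖_F²); (b) |[grad f(Y_k)]_{i,j}| ≤ 2(η + L)·‖Y_k − X_k‖_F for all (i,j) ∈ supp(Y_k); (c) whenever ‖Y_k − X_k‖_F < θ, max{0, −[∇f(Y_k)]_{i,j}} ≤ (η + C)·‖X_{k+1} − Y_k‖_F for all i ∈ zrow(Y_k) and all j. Then for every ε ∈ (0,1) there exists k ≤ K_ε := ⌈(2(f̄ − f̲)/((η − L)ε²))·max{2ε²/θ², 4(η + L)², (η + C)²}⌉ such that Y_k is an ε-approximate first-order stationary point. -/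
open Matrix

attribute [local instance] Matrix.frobeniusNormedAddCommGroup Matrix.frobeniusNormedSpace

/-!
Summing the sufficient decrease (a) over `k = 0, …, K` telescopes to at most `f̄ − f̲`, so some
`k ≤ K_ε` has `‖Y_k − X_k‖_F² + ‖X_{k+1} − Y_k‖_F² < ε²/M`, with `M` the maximum in `K_ε`.
Both steps are then shorter than `ε/√M`: the first term of `M` puts `‖Y_k − X_k‖_F` below `θ`,
so (c) applies, and the other two turn the right-hand sides of (b) and (c) into `ε`.
-/

lemma exists_le_ceil_lt_of_descent {u s : ℕ → ℝ} {lo hi c δ : ℝ} (hc : 0 < c) (hδ : 0 < δ)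
    (hlo : ∀ k, lo ≤ u k) (hhi : ∀ k, u k ≤ hi) (hdesc : ∀ k, c * s k ≤ u k - u (k + 1)) :
    ∃ k ≤ ⌈(hi - lo) / (c * δ)⌉₊, s k < δ := by
  set K := ⌈(hi - lo) / (c * δ)⌉₊
  by_contra! hlarge
  have hsum : (K + 1 : ℝ) * (c * δ) ≤ u 0 - u (K + 1) :=
    calc (K + 1 : ℝ) * (c * δ) = ∑ _k ∈ Finset.range (K + 1), c * δ := by simp
      _ ≤ ∑ k ∈ Finset.range (K + 1), (u k - u (k + 1)) := by
        refine Finset.sum_le_sum fun k hk => (mul_le_mul_of_nonneg_left ?_ hc.le).trans (hdesc k)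
        exact hlarge k (Nat.lt_succ_iff.mp (Finset.mem_range.mp hk))
      _ = u 0 - u (K + 1) := Finset.sum_range_sub' u (K + 1)
  have hK : (hi - lo) / (c * δ) * (c * δ) ≤ K * (c * δ) :=
    mul_le_mul_of_nonneg_right (Nat.le_ceil _) (by positivity)
  rw [div_mul_cancel₀ _ (by positivity)] at hK
  linarith [hlo (K + 1), hhi 0, mul_pos hc hδ]

lemma mul_lt_of_sq_lt_div {a t b M : ℝ} (hb : 0 ≤ b) (hM : 0 < M) (ha : a ^ 2 ≤ M)
    (ht : t ^ 2 < b ^ 2 / M) : a * t < b := by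
  refine lt_of_pow_lt_pow_left₀ 2 hb ?_
  calc (a * t) ^ 2 = a ^ 2 * t ^ 2 := by ring
    _ ≤ M * t ^ 2 := by gcongr
    _ < M * (b ^ 2 / M) := by gcongr
    _ = b ^ 2 := mul_div_cancel₀ _ hM.ne'

theorem iteration_complexity_general
    {n p : ℕ}
    (f : Matrix (Fin n) (Fin p) ℝ → ℝ)
    (g : Matrix (Fin n) (Fin p) ℝ → Matrix (Fin n) (Fin p) ℝ)
    (fl fu : ℝ)
    (hbound : ∀ X : Matrix (Fin n) (Fin p) ℝ, Xᵀ * X = 1 → fl ≤ f X ∧ f X ≤ fu)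
    (L η θ C : ℝ) (hη : L < η) (hθ : 0 < θ)
    (X Y : ℕ → Matrix (Fin n) (Fin p) ℝ)
    (hXf : ∀ k, (X k)ᵀ * X k = 1 ∧ ∀ i j, 0 ≤ X k i j)
    (ha : ∀ k, (η - L) / 2 * (fnorm (Y k - X k) ^ 2 + fnorm (X (k + 1) - Y k) ^ 2)
        ≤ f (X k) - f (X (k + 1)))
    (hb : ∀ k, ∀ i j, Y k i j ≠ 0 →
        |g (Y k) i j - (∑ i', Y k i' j * g (Y k) i' j) * Y k i j|
          ≤ 2 * (η + L) * fnorm (Y k - X k))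
    (hc : ∀ k, fnorm (Y k - X k) < θ → ∀ i, (∀ j, Y k i j = 0) → ∀ j,
        max 0 (-(g (Y k) i j)) ≤ (η + C) * fnorm (X (k + 1) - Y k)) :
    ∀ ε : ℝ, 0 < ε → ε < 1 →
      ∃ k : ℕ,
        k ≤ ⌈(2 * (fu - fl) / ((η - L) * ε ^ 2)) *
              max (2 * ε ^ 2 / θ ^ 2) (max (4 * (η + L) ^ 2) ((η + C) ^ 2))⌉₊ ∧
        (∀ i j, Y k i j ≠ 0 →
          |g (Y k) i j - (∑ i', Y k i' j * g (Y k) i' j) * Y k i j| ≤ ε) ∧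
        (∀ i, (∀ j, Y k i j = 0) → ∀ j, -ε ≤ g (Y k) i j) := by
  intro ε hε _
  set M := max (2 * ε ^ 2 / θ ^ 2) (max (4 * (η + L) ^ 2) ((η + C) ^ 2))
  have hMθ : 2 * ε ^ 2 / θ ^ 2 ≤ M := le_max_left _ _
  have hMb : (2 * (η + L)) ^ 2 ≤ M := by
    have : 4 * (η + L) ^ 2 ≤ M := (le_max_left _ _).trans (le_max_right _ _)
    linarith [mul_pow 2 (η + L) 2]
  have hMc : (η + C) ^ 2 ≤ M := (le_max_right _ _).trans (le_max_right _ _)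
  have hM : 0 < M := lt_of_lt_of_le (by positivity) hMθ
  obtain ⟨k, hk, hsmall⟩ := exists_le_ceil_lt_of_descent (u := fun k => f (X k))
    (half_pos (sub_pos.2 hη)) (div_pos (pow_pos hε 2) hM) (fun k => (hbound _ (hXf k).1).1)
    (fun k => (hbound _ (hXf k).1).2) ha
  have hK : (fu - fl) / ((η - L) / 2 * (ε ^ 2 / M)) = 2 * (fu - fl) / ((η - L) * ε ^ 2) * M := by
    field_simp
  have hstep₁ : fnorm (Y k - X k) ^ 2 < ε ^ 2 / M := by
    linarith [sq_nonneg (fnorm (X (k + 1) - Y k))]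
  have hstep₂ : fnorm (X (k + 1) - Y k) ^ 2 < ε ^ 2 / M := by
    linarith [sq_nonneg (fnorm (Y k - X k))]
  refine ⟨k, hK ▸ hk, fun i j hij => ?_, fun i hi j => ?_⟩
  · exact (hb k i j hij).trans (mul_lt_of_sq_lt_div hε.le hM hMb hstep₁).le
  · have hθM : ε ^ 2 / M ≤ θ ^ 2 / 2 := by
      rw [div_le_div_iff₀ hM two_pos]
      rw [div_le_iff₀ (by positivity)] at hMθ
      linarith
    have hnear : fnorm (Y k - X k) < θ :=
      lt_of_pow_lt_pow_left₀ 2 hθ.le (by linarith [pow_pos hθ 2])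
    have := mul_lt_of_sq_lt_div hε.le hM hMc hstep₂
    linarith [hc k hnear i hi j, le_max_right 0 (-(g (Y k) i j))]

/-- Theorem `thm:complexity`: under the sufficient decrease (a),
support bound (b) and zero-row bound (c), for every `ε ∈ (0,1)` some iterate
`Y_k` with `k ≤ K_ε` is an `ε`-approximate first-order stationary point, where
`K_ε = ⌈(2(f̄ − f̲)/((η − L)ε²))·max{2ε²/θ², 4(η + L)², (η + C)²}⌉`. -/
theorem iteration_complexity
    {n p : ℕ}
    (f : Matrix (Fin n) (Fin p) ℝ → ℝ)
    (g : Matrix (Fin n) (Fin p) ℝ → Matrix (Fin n) (Fin p) ℝ)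
    (hgrad : IsGradient f g)
    (fl fu : ℝ)
    (hbound : ∀ X : Matrix (Fin n) (Fin p) ℝ, Xᵀ * X = 1 → fl ≤ f X ∧ f X ≤ fu)
    (L η θ C : ℝ) (hL : 0 ≤ L) (hη : L < η) (hθ : 0 < θ) (hC : 0 < C)
    (X Y : ℕ → Matrix (Fin n) (Fin p) ℝ)
    (hXf : ∀ k, (X k)ᵀ * X k = 1 ∧ ∀ i j, 0 ≤ X k i j)
    (hYf : ∀ k, (Y k)ᵀ * Y k = 1 ∧ ∀ i j, 0 ≤ Y k i j)
    (ha : ∀ k, (η - L) / 2 * (fnorm (Y k - X k) ^ 2 + fnorm (X (k + 1) - Y k) ^ 2)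
        ≤ f (X k) - f (X (k + 1)))
    (hb : ∀ k, ∀ i j, Y k i j ≠ 0 →
        |g (Y k) i j - (∑ i', Y k i' j * g (Y k) i' j) * Y k i j|
          ≤ 2 * (η + L) * fnorm (Y k - X k))
    (hc : ∀ k, fnorm (Y k - X k) < θ → ∀ i, (∀ j, Y k i j = 0) → ∀ j,
        max 0 (-(g (Y k) i j)) ≤ (η + C) * fnorm (X (k + 1) - Y k)) :
    ∀ ε : ℝ, 0 < ε → ε < 1 →
      ∃ k : ℕ,
        k ≤ ⌈(2 * (fu - fl) / ((η - L) * ε ^ 2)) *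
              max (2 * ε ^ 2 / θ ^ 2) (max (4 * (η + L) ^ 2) ((η + C) ^ 2))⌉₊ ∧
        (∀ i j, Y k i j ≠ 0 →
          |g (Y k) i j - (∑ i', Y k i' j * g (Y k) i' j) * Y k i j| ≤ ε) ∧
        (∀ i, (∀ j, Y k i j = 0) → ∀ j, -ε ≤ g (Y k) i j) :=
  iteration_complexity_general f g fl fu hbound L η θ C hη hθ X Y hXf ha hb hc
end

section
/- Let A ∈ ℝ^{n×n} be a symmetric matrix all of whose entries are strictly negative, and consider f(X) = tr(XᵀAX) (so ∇f(X) = 2AX). Then for every X ∈ O^{n,p}_+ every entry of AX is strictly negative; consequently, every first-order stationary point X ∈ O^{n,p}_+ of the problem min{f(X) : X ∈ O^{n,p}_+} has no zero rows, i.e., zrow(X) = ∅. -/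
open Matrix

/-! A unit column of `X ≥ 0` has a positive entry, and an entrywise negative `A` sends such a
column to an entrywise negative vector. So every row of `∇f(X) = 2AX` is negative, which
contradicts the first-order condition `∇f(X)ᵢ ≥ 0` on any zero row `i`. -/

theorem Matrix.exists_ne_zero_of_transpose_mul_self_eq_one {R l o : Type*} [Fintype l]
    [DecidableEq o] [NonAssocSemiring R] [Nontrivial R] {X : Matrix l o R}
    (hX : Xᵀ * X = 1) (j : o) : ∃ k, X k j ≠ 0 := by
  by_contra! hzero
  have hdiag := congrFun (congrFun hX j) j
  simp [mul_apply, hzero] at hdiag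

theorem Matrix.mul_apply_neg_of_neg_of_nonneg {R m l o : Type*} [Fintype l] [Ring R]
    [LinearOrder R] [IsStrictOrderedRing R] {A : Matrix m l R} {X : Matrix l o R}
    (hA : ∀ i k, A i k < 0) (hX : ∀ k j, 0 ≤ X k j) {j : o} (hcol : ∃ k, X k j ≠ 0) (i : m) :
    (A * X) i j < 0 := by
  obtain ⟨k, hk⟩ := hcol
  rw [mul_apply]
  refine Finset.sum_neg' (fun l _ => mul_nonpos_of_nonpos_of_nonneg (hA i l).le (hX l j))
    ⟨k, Finset.mem_univ k, mul_neg_of_neg_of_pos (hA i k) ((hX k j).lt_of_ne' hk)⟩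

theorem quadratic_objective_stationary_no_zero_rows_general
    {n p : ℕ} (hp : 1 ≤ p)
    (A : Matrix (Fin n) (Fin n) ℝ)
    (hneg : ∀ i j, A i j < 0) :
    (∀ X : Matrix (Fin n) (Fin p) ℝ, Xᵀ * X = 1 → (∀ i j, 0 ≤ X i j) →
        ∀ i j, (A * X) i j < 0) ∧
    (∀ X : Matrix (Fin n) (Fin p) ℝ, Xᵀ * X = 1 → (∀ i j, 0 ≤ X i j) →
        (∀ i j, X i j ≠ 0 →
          2 * (A * X) i j - (∑ i', X i' j * (2 * (A * X) i' j)) * X i j = 0) →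
        (∀ i, (∀ j, X i j = 0) → ∀ j, 0 ≤ 2 * (A * X) i j) →
        ∀ i, ∃ j, X i j ≠ 0) := by
  have hAX_neg : ∀ X : Matrix (Fin n) (Fin p) ℝ, Xᵀ * X = 1 → (∀ i j, 0 ≤ X i j) →
      ∀ i j, (A * X) i j < 0 := fun X horth hnonneg i j =>
    mul_apply_neg_of_neg_of_nonneg hneg hnonneg
      (exists_ne_zero_of_transpose_mul_self_eq_one horth j) i
  refine ⟨hAX_neg, fun X horth hnonneg _ hzrow i => ?_⟩
  by_contra! hrow
  have hgrad_nonneg := hzrow i hrow ⟨0, hp⟩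
  have hgrad_neg := hAX_neg X horth hnonneg i ⟨0, hp⟩
  linarith

/-- for a symmetric matrix `A` with all entries strictly negative
and `f(X) = tr(XᵀAX)` (so `∇f(X) = 2AX`), every `X ∈ O^{n,p}_+` has all entries
of `AX` strictly negative; consequently every first-order stationary point
`X ∈ O^{n,p}_+` of `min f` over `O^{n,p}_+` has no zero rows. -/
theorem quadratic_objective_stationary_no_zero_rows
    {n p : ℕ} (hp : 1 ≤ p)
    (A : Matrix (Fin n) (Fin n) ℝ)
    (hsymm : Aᵀ = A) (hneg : ∀ i j, A i j < 0) :
    (∀ X : Matrix (Fin n) (Fin p) ℝ, Xᵀ * X = 1 → (∀ i j, 0 ≤ X i j) →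
        ∀ i j, (A * X) i j < 0) ∧
    (∀ X : Matrix (Fin n) (Fin p) ℝ, Xᵀ * X = 1 → (∀ i j, 0 ≤ X i j) →
        (∀ i j, X i j ≠ 0 →
          2 * (A * X) i j - (∑ i', X i' j * (2 * (A * X) i' j)) * X i j = 0) →
        (∀ i, (∀ j, X i j = 0) → ∀ j, 0 ≤ 2 * (A * X) i j) →
        ∀ i, ∃ j, X i j ≠ 0) :=
  quadratic_objective_stationary_no_zero_rows_general hp A hneg
end
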